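/- arXiv:1009.0086 — 3 statements merged into one kernel-verified Lean document; each statement's English description precedes it below -/
import Mathlib

section
/- Let (Σ, σ) be a topologically mixing subshift of finite type with Hölder potential φ and Gibbs measure μ with constant c > 1 (i.e., c⁻¹ ≤ μ[x]_n / exp(φⁿ(x) - nP(φ)) ≤ c for all x and n). Then there exists a constant C > 0 such that for all positive integers n, m and all j ≥ n, μ(U_n ∩ σ^{-j}(U_m)) ≤ C · μ(U_n) · μ(U_m), whenever U_n is a union of cylinders of length n and U_m is a union of cylinders of length m. -/
open MeasureTheory

/-- The left shift on one-sided sequences. -/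
def shiftSeq {α : Type*} : (ℕ → α) → ℕ → α := fun x n => x (n + 1)

/-- The cylinder of length `n` centred at `x`. -/
def cyl {α : Type*} (x : ℕ → α) (n : ℕ) : Set (ℕ → α) := {y | ∀ i < n, y i = x i}

/-- The Birkhoff sum `φⁿ(x) = φ(x) + φ(σx) + ⋯ + φ(σ^{n-1}x)`. -/
def birk {α : Type*} (φ : (ℕ → α) → ℝ) (n : ℕ) (x : ℕ → α) : ℝ :=
  ∑ i ∈ Finset.range n, φ (shiftSeq^[i] x)

/-! The Gibbs property makes `μ` quasi-Bernoulli: since `φ^{j+m}(x) = φ^j(x) + φ^m(σ^j x)`,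
`μ[x]_{j+m} ≤ c³ μ[x]_j μ[σ^j x]_m` for every admissible `x`. Split `ℕ → α` into the cells
`[u] ∩ σ^{-j}[v]` indexed by pairs of words `u` of length `j` and `v` of length `m`. A cell meeting
`U ∩ σ^{-j} V` in an admissible point `x` is the cylinder `[x]_{j+m}`, whose two halves lie in
`U ∩ [u]` (because `n ≤ j`) and `V ∩ [v]`; summing the quasi-Bernoulli bound over all cells gives
`μ(U ∩ σ^{-j} V) ≤ c³ μ(U) μ(V)`. -/

section Cylinders

variable {α : Type*}

theorem shiftSeq_iterate_apply (j : ℕ) (x : ℕ → α) (k : ℕ) :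
    shiftSeq^[j] x k = x (k + j) := by
  induction j generalizing x with
  | zero => rfl
  | succ j ih => rw [Function.iterate_succ_apply, ih]; rfl

theorem birk_add (φ : (ℕ → α) → ℝ) (a b : ℕ) (x : ℕ → α) :
    birk φ (a + b) x = birk φ a x + birk φ b (shiftSeq^[a] x) := by
  simp only [birk, Finset.sum_range_add, ← Function.iterate_add_apply, Nat.add_comm _ a]

theorem cyl_anti (x : ℕ → α) {n k : ℕ} (h : n ≤ k) : cyl x k ⊆ cyl x n :=
  fun _ hy i hi => hy i (hi.trans_le h)

theorem cyl_add (x : ℕ → α) (j m : ℕ) :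
    cyl x (j + m) = cyl x j ∩ shiftSeq^[j] ⁻¹' cyl (shiftSeq^[j] x) m := by
  ext y
  simp only [cyl, Set.mem_inter_iff, Set.mem_preimage, Set.mem_ofPred_eq, shiftSeq_iterate_apply]
  refine ⟨fun h => ⟨fun i hi => h i (by omega), fun i hi => h _ (by omega)⟩,
    fun ⟨h₁, h₂⟩ i hi => ?_⟩
  rcases Nat.lt_or_ge i j with hij | hij
  · exact h₁ i hij
  · simpa [Nat.sub_add_cancel hij] using h₂ (i - j) (by omega)

def wordCyl {k : ℕ} (w : Fin k → α) : Set (ℕ → α) := {x | ∀ i : Fin k, x i = w i}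

theorem cyl_eq_wordCyl_of_mem {k : ℕ} {w : Fin k → α} {x : ℕ → α} (hx : x ∈ wordCyl w) :
    cyl x k = wordCyl w := by
  ext y
  exact ⟨fun hy i => (hy i i.isLt).trans (hx i),
    fun hy i hi => (hy ⟨i, hi⟩).trans (hx ⟨i, hi⟩).symm⟩

theorem measurableSet_wordCyl [MeasurableSpace α] [MeasurableSingletonClass α] {k : ℕ}
    (w : Fin k → α) : MeasurableSet (wordCyl w) := by
  simp only [wordCyl, Set.ofPred_forall]
  exact MeasurableSet.iInter fun i => measurable_pi_apply _ (measurableSet_singleton _)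

theorem pairwise_disjoint_wordCyl (k : ℕ) :
    Pairwise (Function.onFun Disjoint fun w : Fin k → α => wordCyl w) :=
  fun _ _ hne => Set.disjoint_left.2 fun _ hx hx' =>
    hne (funext fun i => (hx i).symm.trans (hx' i))

theorem iUnion_wordCyl (k : ℕ) : ⋃ w : Fin k → α, wordCyl w = Set.univ :=
  Set.eq_univ_of_forall fun x => Set.mem_iUnion.2 ⟨fun i => x i, fun _ => rfl⟩

theorem sum_measure_inter_wordCyl [Fintype α] [MeasurableSpace α] [MeasurableSingletonClass α]
    (μ : Measure (ℕ → α)) (k : ℕ) {s : Set (ℕ → α)} (hs : MeasurableSet s) :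
    ∑ w : Fin k → α, μ (s ∩ wordCyl w) = μ s := by
  have hdisj : Pairwise (Function.onFun Disjoint fun w : Fin k → α => s ∩ wordCyl w) :=
    (pairwise_disjoint_wordCyl k).mono fun _ _ h =>
      h.mono Set.inter_subset_right Set.inter_subset_right
  rw [← tsum_fintype (L := .unconditional _),
    ← measure_iUnion hdisj fun w => hs.inter (measurableSet_wordCyl w),
    ← Set.inter_iUnion, iUnion_wordCyl, Set.inter_univ]

theorem measure_le_sum_inter_wordCyl_prod [Fintype α] [MeasurableSpace α]
    (μ : Measure (ℕ → α)) (s : Set (ℕ → α)) (j m : ℕ) :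
    μ s ≤ ∑ p : (Fin j → α) × (Fin m → α),
      μ (s ∩ (wordCyl p.1 ∩ shiftSeq^[j] ⁻¹' wordCyl p.2)) := by
  refine (measure_mono fun x hx => Set.mem_iUnion.2 ?_).trans (measure_iUnion_fintype_le μ _)
  exact ⟨(fun i => x i, fun i => shiftSeq^[j] x i), hx, fun _ => rfl, fun _ => rfl⟩

end Cylinders

section Gibbs

variable {α : Type*} {A : α → α → Bool}

def admissible (A : α → α → Bool) : Set (ℕ → α) := {x | ∀ n, A (x n) (x (n + 1)) = true}

theorem shiftSeq_iterate_mem_admissible {x : ℕ → α} (hx : x ∈ admissible A) (j : ℕ) :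
    shiftSeq^[j] x ∈ admissible A := fun k => by
  simpa only [shiftSeq_iterate_apply, Nat.add_right_comm k 1 j] using hx (k + j)

theorem measurableSet_admissible [MeasurableSpace α] [DiscreteMeasurableSpace α] [Countable α]
    (A : α → α → Bool) : MeasurableSet (admissible A) := by
  simp only [admissible, Set.ofPred_forall]
  exact MeasurableSet.iInter fun k => (by fun_prop : Measurable fun x : ℕ → α =>
    A (x k) (x (k + 1))) (measurableSet_singleton true)

def IsGibbs [MeasurableSpace α] (A : α → α → Bool) (φ : (ℕ → α) → ℝ) (μ : Measure (ℕ → α))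
    (P c : ℝ) : Prop :=
  ∀ x ∈ admissible A, ∀ n : ℕ, 1 ≤ n →
    ENNReal.ofReal (c⁻¹ * Real.exp (birk φ n x - n * P)) ≤ μ (cyl x n) ∧
    μ (cyl x n) ≤ ENNReal.ofReal (c * Real.exp (birk φ n x - n * P))

variable [MeasurableSpace α] {φ : (ℕ → α) → ℝ} {μ : Measure (ℕ → α)} {P c : ℝ}

theorem IsGibbs.measure_cyl_add_le (hG : IsGibbs A φ μ P c) (hc : 0 < c) {x : ℕ → α}
    (hx : x ∈ admissible A) {j m : ℕ} (hj : 1 ≤ j) (hm : 1 ≤ m) :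
    μ (cyl x (j + m)) ≤ ENNReal.ofReal (c ^ 3) * μ (cyl x j) * μ (cyl (shiftSeq^[j] x) m) := by
  have hsplit : c * Real.exp (birk φ (j + m) x - ↑(j + m) * P) =
      c ^ 3 * (c⁻¹ * Real.exp (birk φ j x - j * P)) *
        (c⁻¹ * Real.exp (birk φ m (shiftSeq^[j] x) - m * P)) := by
    rw [birk_add, Nat.cast_add, add_mul, add_sub_add_comm, Real.exp_add]
    field_simp
  calc μ (cyl x (j + m)) ≤ ENNReal.ofReal (c * Real.exp (birk φ (j + m) x - ↑(j + m) * P)) :=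
        (hG x hx _ (by omega)).2
    _ = ENNReal.ofReal (c ^ 3) * ENNReal.ofReal (c⁻¹ * Real.exp (birk φ j x - j * P)) *
          ENNReal.ofReal (c⁻¹ * Real.exp (birk φ m (shiftSeq^[j] x) - m * P)) := by
        rw [hsplit, ENNReal.ofReal_mul (by positivity), ENNReal.ofReal_mul (by positivity)]
    _ ≤ ENNReal.ofReal (c ^ 3) * μ (cyl x j) * μ (cyl (shiftSeq^[j] x) m) := by
        gcongr
        exacts [(hG x hx j hj).1, (hG _ (shiftSeq_iterate_mem_admissible hx j) m hm).1]

theorem IsGibbs.measure_inter_preimage_inter_wordCyl_le (hG : IsGibbs A φ μ P c) (hc : 0 < c)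
    (hnull : μ (admissible A)ᶜ = 0) {n m j : ℕ} (hn : 1 ≤ n) (hm : 1 ≤ m) (hnj : n ≤ j)
    {U V : Set (ℕ → α)} (hU : ∀ x ∈ U, cyl x n ⊆ U) (hV : ∀ x ∈ V, cyl x m ⊆ V)
    (u : Fin j → α) (v : Fin m → α) :
    μ (U ∩ shiftSeq^[j] ⁻¹' V ∩ (wordCyl u ∩ shiftSeq^[j] ⁻¹' wordCyl v)) ≤
      ENNReal.ofReal (c ^ 3) * μ (U ∩ wordCyl u) * μ (V ∩ wordCyl v) := by
  rw [← measure_inter_conull hnull]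
  rcases Set.eq_empty_or_nonempty
      (U ∩ shiftSeq^[j] ⁻¹' V ∩ (wordCyl u ∩ shiftSeq^[j] ⁻¹' wordCyl v) ∩ admissible A) with
    hempty | ⟨x, ⟨⟨hxU, hxV⟩, hxu, hxv⟩, hxA⟩
  · simp [hempty]
  have hcell : wordCyl u ∩ shiftSeq^[j] ⁻¹' wordCyl v = cyl x (j + m) := by
    rw [cyl_add, cyl_eq_wordCyl_of_mem hxu, cyl_eq_wordCyl_of_mem hxv]
  calc _ ≤ μ (cyl x (j + m)) :=
        measure_mono (hcell ▸ Set.inter_subset_left.trans Set.inter_subset_right)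
    _ ≤ ENNReal.ofReal (c ^ 3) * μ (cyl x j) * μ (cyl (shiftSeq^[j] x) m) :=
        hG.measure_cyl_add_le hc hxA (hn.trans hnj) hm
    _ ≤ ENNReal.ofReal (c ^ 3) * μ (U ∩ wordCyl u) * μ (V ∩ wordCyl v) := by
        gcongr
        · exact Set.subset_inter ((cyl_anti x hnj).trans (hU x hxU)) (cyl_eq_wordCyl_of_mem hxu).le
        · exact Set.subset_inter (hV _ hxV) (cyl_eq_wordCyl_of_mem hxv).le

end Gibbs

theorem gibbs_correlation_bound_general {l : ℕ} (A : Fin l → Fin l → Bool)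
    (φ : (ℕ → Fin l) → ℝ)
    (μ : Measure (ℕ → Fin l)) [IsProbabilityMeasure μ]
    (hsupp : μ {x | ∀ n, A (x n) (x (n + 1)) = true} = 1)
    (P : ℝ) (c : ℝ) (hc : 1 < c)
    (hGibbs : ∀ x : ℕ → Fin l, (∀ n, A (x n) (x (n + 1)) = true) → ∀ n : ℕ, 1 ≤ n →
      ENNReal.ofReal (c⁻¹ * Real.exp (birk φ n x - n * P)) ≤ μ (cyl x n) ∧
      μ (cyl x n) ≤ ENNReal.ofReal (c * Real.exp (birk φ n x - n * P))) :
    ∃ C : ℝ, 0 < C ∧ ∀ n m j : ℕ, 1 ≤ n → 1 ≤ m → n ≤ j →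
      ∀ U V : Set (ℕ → Fin l), MeasurableSet U → MeasurableSet V →
        (∀ x ∈ U, cyl x n ⊆ U) → (∀ x ∈ V, cyl x m ⊆ V) →
        μ (U ∩ shiftSeq^[j] ⁻¹' V) ≤ ENNReal.ofReal C * μ U * μ V := by
  have hc0 : 0 < c := by linarith
  have hnull : μ (admissible A)ᶜ = 0 :=
    (prob_compl_eq_zero_iff (measurableSet_admissible A)).2 hsupp
  refine ⟨c ^ 3, by positivity, fun n m j hn hm hnj U V hUm hVm hU hV => ?_⟩
  calc μ (U ∩ shiftSeq^[j] ⁻¹' V)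
      ≤ ∑ p : (Fin j → Fin l) × (Fin m → Fin l),
          μ (U ∩ shiftSeq^[j] ⁻¹' V ∩ (wordCyl p.1 ∩ shiftSeq^[j] ⁻¹' wordCyl p.2)) :=
        measure_le_sum_inter_wordCyl_prod μ _ j m
    _ ≤ ∑ p : (Fin j → Fin l) × (Fin m → Fin l),
          ENNReal.ofReal (c ^ 3) * μ (U ∩ wordCyl p.1) * μ (V ∩ wordCyl p.2) :=
        Finset.sum_le_sum fun p _ => IsGibbs.measure_inter_preimage_inter_wordCyl_le hGibbs hc0
          hnull hn hm hnj hU hV p.1 p.2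
    _ = ENNReal.ofReal (c ^ 3) * (∑ u : Fin j → Fin l, μ (U ∩ wordCyl u)) *
          ∑ v : Fin m → Fin l, μ (V ∩ wordCyl v) := by
        rw [mul_assoc, Fintype.sum_mul_sum, Finset.mul_sum, Fintype.sum_prod_type]
        simp only [Finset.mul_sum, mul_assoc]
    _ = ENNReal.ofReal (c ^ 3) * μ U * μ V := by
        rw [sum_measure_inter_wordCyl μ j hUm, sum_measure_inter_wordCyl μ m hVm]

/-- For a topologically mixing subshift of finite type with Hölder potential
`φ` and Gibbs measure `μ` (with Gibbs constant `c > 1` and pressure `P`), there is a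
constant `C > 0` such that for all `n, m ≥ 1` and all `j ≥ n`,
`μ(U_n ∩ σ^{-j} U_m) ≤ C μ(U_n) μ(U_m)` whenever `U_n` is a union of `n`-cylinders and
`U_m` a union of `m`-cylinders. -/
theorem gibbs_correlation_bound {l : ℕ} (A : Fin l → Fin l → Bool)
    (hirr : ∃ d : ℕ, 1 ≤ d ∧ ∀ i j : Fin l, ∃ y : ℕ → Fin l,
      y 0 = i ∧ y d = j ∧ ∀ k < d, A (y k) (y (k + 1)) = true)
    (θ : ℝ) (hθ : 0 < θ) (hθ1 : θ < 1)
    (φ : (ℕ → Fin l) → ℝ) (Kφ : ℝ)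
    (hφ : ∀ x y : ℕ → Fin l, ∀ n : ℕ, (∀ i < n, x i = y i) → |φ x - φ y| ≤ Kφ * θ ^ n)
    (μ : Measure (ℕ → Fin l)) [IsProbabilityMeasure μ]
    (hsupp : μ {x | ∀ n, A (x n) (x (n + 1)) = true} = 1)
    (P : ℝ) (c : ℝ) (hc : 1 < c)
    (hGibbs : ∀ x : ℕ → Fin l, (∀ n, A (x n) (x (n + 1)) = true) → ∀ n : ℕ, 1 ≤ n →
      ENNReal.ofReal (c⁻¹ * Real.exp (birk φ n x - n * P)) ≤ μ (cyl x n) ∧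
      μ (cyl x n) ≤ ENNReal.ofReal (c * Real.exp (birk φ n x - n * P))) :
    ∃ C : ℝ, 0 < C ∧ ∀ n m j : ℕ, 1 ≤ n → 1 ≤ m → n ≤ j →
      ∀ U V : Set (ℕ → Fin l), MeasurableSet U → MeasurableSet V →
        (∀ x ∈ U, cyl x n ⊆ U) → (∀ x ∈ V, cyl x m ⊆ V) →
        μ (U ∩ shiftSeq^[j] ⁻¹' V) ≤ ENNReal.ofReal C * μ U * μ V :=
  gibbs_correlation_bound_general A φ μ hsupp P c hc hGibbs
end

section
/- There exists a constant C > 0 such that for every w ∈ B_θ and μ-almost every x ∈ Σ, |w(x)| ≤ C ‖w‖_θ; that is, the essential supremum norm is dominated by the ‖·‖_θ norm. -/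
/-!
For `y` in a 1-cylinder `[a]` and a.e. `z ∈ [a]`, `|w y| ≤ osc(w, 1, a) + |w z|`; averaging over
`z ∈ [a]` gives `μ[a] |w y| ≤ μ[a] osc(w, 1, a) + ‖w‖₁`, and since `osc(w, 1, ·)` is constant on
`[a]`, `μ[a] osc(w, 1, a) ≤ ∫ osc(w, 1, ·) dμ ≤ θ |w|_θ ≤ |w|_θ`. Hence `|w| ≤ μ[a]⁻¹ ‖w‖_θ`
a.e. on `[a]`, and the finitely many 1-cylinders cover the space, so `C = ∑ₐ μ[a]⁻¹` works.
-/

open MeasureTheory Filter ENNReal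

noncomputable section

/-- `osc(w, m, x)`: the essential supremum of `|w(y) − w(z)|` over `y, z` in the
cylinder `[x]_m` (with respect to `μ`). -/
def oscE {α : Type*} [MeasurableSpace α] (μ : Measure (ℕ → α))
    (w : (ℕ → α) → ℝ) (m : ℕ) (x : ℕ → α) : ℝ≥0∞ :=
  essSup (fun p : (ℕ → α) × (ℕ → α) => ENNReal.ofReal |w p.1 - w p.2|)
    ((μ.restrict (cyl x m)).prod (μ.restrict (cyl x m)))

/-- The seminorm `|w|_θ = sup_{m ≥ 1} θ^{-m} ∫ osc(w, m, ·) dμ`. -/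
def thetaSemi {α : Type*} [MeasurableSpace α] (μ : Measure (ℕ → α)) (θ : ℝ)
    (w : (ℕ → α) → ℝ) : ℝ≥0∞ :=
  ⨆ m : ℕ, ⨆ _ : 1 ≤ m, (ENNReal.ofReal θ ^ m)⁻¹ * ∫⁻ x, oscE μ w m x ∂μ

/-- The norm `‖w‖_θ = |w|_θ + ‖w‖_{L¹(μ)}`. -/
def thetaNorm {α : Type*} [MeasurableSpace α] (μ : Measure (ℕ → α)) (θ : ℝ)
    (w : (ℕ → α) → ℝ) : ℝ≥0∞ :=
  thetaSemi μ θ w + ∫⁻ x, ENNReal.ofReal |w x| ∂μ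

theorem ae_restrict_measure_mul_le_mul_essSup_add {β : Type*} [MeasurableSpace β]
    (ν : Measure β) [SFinite ν] (s : Set β) (f : β → ℝ) :
    ∀ᵐ y ∂ν.restrict s, ν s * ENNReal.ofReal |f y| ≤
      ν s * essSup (fun p : β × β => ENNReal.ofReal |f p.1 - f p.2|)
          ((ν.restrict s).prod (ν.restrict s)) +
        ∫⁻ z in s, ENNReal.ofReal |f z| ∂ν := by
  set O := essSup (fun p : β × β => ENNReal.ofReal |f p.1 - f p.2|)
    ((ν.restrict s).prod (ν.restrict s))
  have hosc : ∀ᵐ y ∂ν.restrict s, ∀ᵐ z ∂ν.restrict s, ENNReal.ofReal |f y - f z| ≤ O :=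
    Measure.ae_ae_of_ae_prod (ENNReal.ae_le_essSup _)
  filter_upwards [hosc] with y hy
  have hpoint : ∀ᵐ z ∂ν.restrict s, ENNReal.ofReal |f y| ≤ O + ENNReal.ofReal |f z| := by
    filter_upwards [hy] with z hz
    calc ENNReal.ofReal |f y| ≤ ENNReal.ofReal (|f y - f z| + |f z|) :=
          ENNReal.ofReal_le_ofReal (by linarith [abs_sub_abs_le_abs_sub (f y) (f z)])
      _ ≤ ENNReal.ofReal |f y - f z| + ENNReal.ofReal |f z| := ENNReal.ofReal_add_le
      _ ≤ O + ENNReal.ofReal |f z| := by gcongr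
  calc ν s * ENNReal.ofReal |f y| = ∫⁻ _ in s, ENNReal.ofReal |f y| ∂ν := by
        rw [setLIntegral_const, mul_comm]
    _ ≤ ∫⁻ z in s, (O + ENNReal.ofReal |f z|) ∂ν := lintegral_mono_ae hpoint
    _ = ν s * O + ∫⁻ z in s, ENNReal.ofReal |f z| ∂ν := by
        rw [lintegral_add_left measurable_const, setLIntegral_const, mul_comm]

section Cylinders

variable {α : Type*}

theorem mem_cyl_one {x y : ℕ → α} : y ∈ cyl x 1 ↔ y 0 = x 0 :=
  ⟨fun h => h 0 one_pos, fun h i hi => by rwa [Nat.lt_one_iff.1 hi]⟩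

theorem cyl_one_eq_preimage (x : ℕ → α) : cyl x 1 = (fun y => y 0) ⁻¹' {x 0} :=
  Set.ext fun _ => mem_cyl_one

theorem cyl_one_eq_of_mem {x y : ℕ → α} (h : x ∈ cyl y 1) : cyl x 1 = cyl y 1 :=
  Set.ext fun _ => by rw [mem_cyl_one, mem_cyl_one, mem_cyl_one.1 h]

theorem iUnion_cyl_one_const : ⋃ a : α, cyl (fun _ => a) 1 = Set.univ :=
  Set.eq_univ_of_forall fun y => Set.mem_iUnion.2 ⟨y 0, mem_cyl_one.2 rfl⟩

theorem measurableSet_cyl_one [MeasurableSpace α] [MeasurableSingletonClass α] (x : ℕ → α) :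
    MeasurableSet (cyl x 1) := by
  rw [cyl_one_eq_preimage]
  exact measurable_pi_apply 0 (measurableSet_singleton _)

end Cylinders

section Oscillation

variable {α : Type*} [MeasurableSpace α] (μ : Measure (ℕ → α)) (w : (ℕ → α) → ℝ)

theorem lintegral_oscE_one_le {θ : ℝ} (hθ : 0 < θ) :
    ∫⁻ x, oscE μ w 1 x ∂μ ≤ ENNReal.ofReal θ * thetaSemi μ θ w := by
  have hθ0 : ENNReal.ofReal θ ≠ 0 := (ENNReal.ofReal_pos.2 hθ).ne'
  rw [← ENNReal.inv_mul_le_iff hθ0 ofReal_ne_top, ← pow_one (ENNReal.ofReal θ)]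
  exact le_iSup₂_of_le 1 le_rfl le_rfl

theorem measure_cyl_one_mul_oscE_le [MeasurableSingletonClass α] (x : ℕ → α) :
    μ (cyl x 1) * oscE μ w 1 x ≤ ∫⁻ y, oscE μ w 1 y ∂μ :=
  calc μ (cyl x 1) * oscE μ w 1 x = ∫⁻ y in cyl x 1, oscE μ w 1 y ∂μ := by
        rw [mul_comm, ← setLIntegral_const]
        refine setLIntegral_congr_fun (measurableSet_cyl_one x) fun y hy => ?_
        simp only [oscE, cyl_one_eq_of_mem hy]
    _ ≤ ∫⁻ y, oscE μ w 1 y ∂μ := setLIntegral_le_lintegral _ _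

theorem ae_restrict_cyl_one_le_inv_mul_thetaNorm [MeasurableSingletonClass α]
    [IsFiniteMeasure μ] {θ : ℝ} (hθ : 0 < θ) (hθ1 : θ ≤ 1) (x : ℕ → α)
    (hx : μ (cyl x 1) ≠ 0) :
    ∀ᵐ y ∂μ.restrict (cyl x 1),
      ENNReal.ofReal |w y| ≤ (μ (cyl x 1))⁻¹ * thetaNorm μ θ w := by
  filter_upwards [ae_restrict_measure_mul_le_mul_essSup_add μ (cyl x 1) w] with y hy
  rw [← ENNReal.mul_le_iff_le_inv hx (measure_ne_top _ _)]
  have hθ1' : ENNReal.ofReal θ ≤ 1 := ENNReal.ofReal_le_one.2 hθ1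
  calc μ (cyl x 1) * ENNReal.ofReal |w y|
      ≤ μ (cyl x 1) * oscE μ w 1 x + ∫⁻ z in cyl x 1, ENNReal.ofReal |w z| ∂μ := hy
    _ ≤ ENNReal.ofReal θ * thetaSemi μ θ w + ∫⁻ z, ENNReal.ofReal |w z| ∂μ :=
        add_le_add ((measure_cyl_one_mul_oscE_le μ w x).trans (lintegral_oscE_one_le μ w hθ))
          (setLIntegral_le_lintegral _ _)
    _ ≤ thetaNorm μ θ w := by
        unfold thetaNorm
        gcongr
        exact mul_le_of_le_one_left' hθ1'

end Oscillation

/-- There is `C > 0` such that for every `w ∈ B_θ` one has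
`|w(x)| ≤ C ‖w‖_θ` for `μ`-a.e. `x`: the essential sup norm is dominated by `‖·‖_θ`.
(Every 1-cylinder is assumed to have positive measure.) -/
theorem sup_norm_le_thetaNorm {l : ℕ} (θ : ℝ) (hθ : 0 < θ) (hθ1 : θ < 1)
    (μ : Measure (ℕ → Fin l)) [IsProbabilityMeasure μ]
    (hone : ∀ a : Fin l, 0 < μ (cyl (fun _ => a) 1)) :
    ∃ C : ℝ, 0 < C ∧ ∀ w : (ℕ → Fin l) → ℝ, Measurable w →
      ∀ᵐ x ∂μ, ENNReal.ofReal |w x| ≤ ENNReal.ofReal C * thetaNorm μ θ w := by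
  obtain ⟨x⟩ := nonempty_of_isProbabilityMeasure μ
  set K := ∑ a : Fin l, (μ (cyl (fun _ => a) 1))⁻¹
  have hK_le : ∀ a, (μ (cyl (fun _ => a) 1))⁻¹ ≤ K := fun a =>
    Finset.single_le_sum (f := fun a => (μ (cyl (fun _ => a) 1))⁻¹) (fun _ _ => zero_le)
      (Finset.mem_univ a)
  have hK_ne_top : K ≠ ∞ := ENNReal.sum_ne_top.2 fun a _ => ENNReal.inv_ne_top.2 (hone a).ne'
  have hK_pos : 0 < K := (ENNReal.inv_pos.2 (measure_ne_top _ _)).trans_le (hK_le (x 0))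
  refine ⟨K.toReal, ENNReal.toReal_pos hK_pos.ne' hK_ne_top, fun w _ => ?_⟩
  rw [ENNReal.ofReal_toReal hK_ne_top]
  suffices h : ∀ᵐ y ∂μ.restrict (⋃ a : Fin l, cyl (fun _ => a) 1),
      ENNReal.ofReal |w y| ≤ K * thetaNorm μ θ w by
    rwa [iUnion_cyl_one_const, Measure.restrict_univ] at h
  refine (ae_restrict_iUnion_iff _ _).2 fun a => ?_
  filter_upwards [ae_restrict_cyl_one_le_inv_mul_thetaNorm μ w hθ hθ1.le _ (hone a).ne']
    with y hy
  exact hy.trans (by gcongr; exact hK_le a)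

end
end

section
/- Let L and L_n be bounded operators on B_θ with L_n w = L(χ_{U_n^c} w), where μ(U_n) ≤ cρⁿ and ρ < θ < 1, the U_n are nested unions of n-cylinders, and μ is a Gibbs measure satisfying μ(U_n ∩ σ^{-j}(U_m)) ≤ c μ(U_n)μ(U_m) for j ≥ n. Then the asymmetric operator norm satisfies |||L − L_n||| ≤ C(ρ/θ)ⁿ for some constant C > 0, where |||Q||| = sup{‖Qw‖_h : ‖w‖_θ ≤ 1} and ‖w‖_h = sup_{j≥0} sup_{m≥1} θ^{-m} ∫_{σ^{-j}(U_m)} |w| dμ + ‖w‖_{L¹(μ)}. -/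
open MeasureTheory Filter ENNReal

noncomputable section

/-- Prepend a symbol to a sequence. -/
def prepend {α : Type*} (a : α) (x : ℕ → α) : ℕ → α :=
  fun n => match n with
  | 0 => a
  | k + 1 => x k

/-- The transfer operator `(Lw)(x) = Σ_{σ y = x} e^{φ(y)} w(y)`. -/
def transfer {l : ℕ} (A : Fin l → Fin l → Bool) (φ : (ℕ → Fin l) → ℝ)
    (w : (ℕ → Fin l) → ℝ) (x : ℕ → Fin l) : ℝ :=
  ∑ a : Fin l,
    if A a (x 0) then Real.exp (φ (prepend a x)) * w (prepend a x) else 0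

/-- The `ℝ≥0∞`-valued transfer operator, used to express the duality `L*μ = μ`. -/
def transferE {l : ℕ} (A : Fin l → Fin l → Bool) (φ : (ℕ → Fin l) → ℝ)
    (g : (ℕ → Fin l) → ℝ≥0∞) (x : ℕ → Fin l) : ℝ≥0∞ :=
  ∑ a : Fin l,
    if A a (x 0) then ENNReal.ofReal (Real.exp (φ (prepend a x))) * g (prepend a x)
    else 0

/-- The weak norm `‖w‖_h = sup_{j ≥ 0} sup_{m ≥ 1} θ^{-m} ∫_{σ^{-j} U_m} |w| dμ + ‖w‖₁`. -/
def holeNorm {l : ℕ} (μ : Measure (ℕ → Fin l)) (θ : ℝ)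
    (U : ℕ → Set (ℕ → Fin l)) (w : (ℕ → Fin l) → ℝ) : ℝ≥0∞ :=
  (⨆ j : ℕ, ⨆ m : ℕ, ⨆ _ : 1 ≤ m, (ENNReal.ofReal θ ^ m)⁻¹ *
      ∫⁻ x in shiftSeq^[j] ⁻¹' U m, ENNReal.ofReal |w x| ∂μ) +
    ∫⁻ x, ENNReal.ofReal |w x| ∂μ

lemma shiftSeq_prepend {l : ℕ} (a : Fin l) (x : ℕ → Fin l) : shiftSeq (prepend a x) = x := rfl

lemma measurable_shiftSeq {α : Type*} [MeasurableSpace α] :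
    Measurable (shiftSeq : (ℕ → α) → ℕ → α) :=
  measurable_pi_lambda _ fun n => measurable_pi_apply (n + 1)

lemma ofReal_transfer {l : ℕ} (A : Fin l → Fin l → Bool) (φ : (ℕ → Fin l) → ℝ)
    (w : (ℕ → Fin l) → ℝ) (hw : ∀ y, 0 ≤ w y) (x : ℕ → Fin l) :
    ENNReal.ofReal (transfer A φ w x) = transferE A φ (fun y => ENNReal.ofReal (w y)) x := by
  unfold transfer transferE
  rw [ENNReal.ofReal_sum_of_nonneg]
  · refine Finset.sum_congr rfl fun a _ => ?_
    split
    · rw [ENNReal.ofReal_mul (Real.exp_pos _).le]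
    · simp
  · intro a _
    split
    · exact mul_nonneg (Real.exp_pos _).le (hw _)
    · exact le_refl 0

lemma transferE_one {l : ℕ} (A : Fin l → Fin l → Bool) (φ : (ℕ → Fin l) → ℝ)
    (hL1 : ∀ x, transfer A φ (fun _ => 1) x = 1) (x : ℕ → Fin l) :
    transferE A φ (fun _ => 1) x = 1 := by
  have h := ofReal_transfer A φ (fun _ => 1) (fun _ => zero_le_one) x
  rw [hL1 x, ENNReal.ofReal_one] at h
  simpa using h.symm

lemma abs_transfer_le {l : ℕ} (A : Fin l → Fin l → Bool) (φ : (ℕ → Fin l) → ℝ)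
    (w : (ℕ → Fin l) → ℝ) (x : ℕ → Fin l) :
    ENNReal.ofReal |transfer A φ w x| ≤ transferE A φ (fun y => ENNReal.ofReal |w y|) x := by
  rw [← ofReal_transfer A φ (fun y => |w y|) (fun y => abs_nonneg _) x]
  apply ENNReal.ofReal_le_ofReal
  unfold transfer
  refine (Finset.abs_sum_le_sum_abs _ _).trans (le_of_eq (Finset.sum_congr rfl fun a _ => ?_))
  split
  · rw [abs_mul, abs_of_nonneg (Real.exp_pos _).le]
  · simp

lemma transferE_mul_shift {l : ℕ} (A : Fin l → Fin l → Bool) (φ : (ℕ → Fin l) → ℝ)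
    (g h : (ℕ → Fin l) → ℝ≥0∞) (x : ℕ → Fin l) :
    transferE A φ (fun y => g y * h (shiftSeq y)) x = transferE A φ g x * h x := by
  unfold transferE
  rw [Finset.sum_mul]
  refine Finset.sum_congr rfl fun a _ => ?_
  simp only [shiftSeq_prepend]
  split
  · ring
  · simp


lemma key_int {l : ℕ} (A : Fin l → Fin l → Bool) (φ : (ℕ → Fin l) → ℝ)
    (μ : Measure (ℕ → Fin l))
    (hdual : ∀ g : (ℕ → Fin l) → ℝ≥0∞, Measurable g →
      ∫⁻ x, transferE A φ g x ∂μ = ∫⁻ x, g x ∂μ)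
    (g : (ℕ → Fin l) → ℝ) (hg : Measurable g)
    (S : Set (ℕ → Fin l)) (hS : MeasurableSet S) :
    ∫⁻ x in S, ENNReal.ofReal |transfer A φ g x| ∂μ
      ≤ ∫⁻ y in shiftSeq ⁻¹' S, ENNReal.ofReal |g y| ∂μ := by
  have h1 : ∀ x, S.indicator (fun x => ENNReal.ofReal |transfer A φ g x|) x
      ≤ transferE A φ
        (fun y => ENNReal.ofReal |g y| * S.indicator (fun _ => (1:ℝ≥0∞)) (shiftSeq y)) x := by
    intro x
    rw [transferE_mul_shift]
    by_cases hx : x ∈ S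
    · simp only [Set.indicator_of_mem hx, mul_one]
      exact abs_transfer_le A φ g x
    · simp [Set.indicator_of_notMem hx]
  have hmeas : Measurable
      (fun y => ENNReal.ofReal |g y| * S.indicator (fun _ => (1:ℝ≥0∞)) (shiftSeq y)) :=
    (hg.abs.ennreal_ofReal).mul ((measurable_const.indicator hS).comp measurable_shiftSeq)
  calc ∫⁻ x in S, ENNReal.ofReal |transfer A φ g x| ∂μ
      = ∫⁻ x, S.indicator (fun x => ENNReal.ofReal |transfer A φ g x|) x ∂μ :=
        (lintegral_indicator hS _).symm
    _ ≤ ∫⁻ x, transferE A φ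
          (fun y => ENNReal.ofReal |g y| * S.indicator (fun _ => (1:ℝ≥0∞)) (shiftSeq y)) x ∂μ :=
        lintegral_mono h1
    _ = ∫⁻ y, ENNReal.ofReal |g y| * S.indicator (fun _ => (1:ℝ≥0∞)) (shiftSeq y) ∂μ :=
        hdual _ hmeas
    _ = ∫⁻ y, (shiftSeq ⁻¹' S).indicator (fun y => ENNReal.ofReal |g y|) y ∂μ := by
        congr 1; funext y
        by_cases hy : shiftSeq y ∈ S
        · simp [Set.indicator_of_mem hy, Set.indicator_of_mem (Set.mem_preimage.2 hy)]
        · simp [Set.indicator_of_notMem hy,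
            Set.indicator_of_notMem (fun h => hy (Set.mem_preimage.1 h))]
    _ = ∫⁻ y in shiftSeq ⁻¹' S, ENNReal.ofReal |g y| ∂μ :=
        lintegral_indicator (measurable_shiftSeq hS) _

lemma shift_inv {l : ℕ} (A : Fin l → Fin l → Bool) (φ : (ℕ → Fin l) → ℝ)
    (μ : Measure (ℕ → Fin l))
    (hL1 : ∀ x, transfer A φ (fun _ => 1) x = 1)
    (hdual : ∀ g : (ℕ → Fin l) → ℝ≥0∞, Measurable g →
      ∫⁻ x, transferE A φ g x ∂μ = ∫⁻ x, g x ∂μ)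
    (S : Set (ℕ → Fin l)) (hS : MeasurableSet S) (k : ℕ) :
    μ (shiftSeq^[k] ⁻¹' S) = μ S := by
  induction k with
  | zero => simp
  | succ k ih =>
    have hstep : ∀ T : Set (ℕ → Fin l), MeasurableSet T → μ (shiftSeq ⁻¹' T) = μ T := by
      intro T hT
      have hpt : ∀ x, transferE A φ
          (fun y => T.indicator (fun _ => (1:ℝ≥0∞)) (shiftSeq y)) x
          = T.indicator (fun _ => (1:ℝ≥0∞)) x := by
        intro x
        have h := transferE_mul_shift A φ (fun _ => 1) (T.indicator fun _ => (1:ℝ≥0∞)) x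
        simp only [one_mul] at h
        rw [h, transferE_one A φ hL1, one_mul]
      have hmeas : Measurable (fun y => T.indicator (fun _ => (1:ℝ≥0∞)) (shiftSeq y)) :=
        (measurable_const.indicator hT).comp measurable_shiftSeq
      calc μ (shiftSeq ⁻¹' T)
          = ∫⁻ y, (shiftSeq ⁻¹' T).indicator (fun _ => (1:ℝ≥0∞)) y ∂μ := by
            rw [lintegral_indicator (measurable_shiftSeq hT)]; simp
        _ = ∫⁻ y, T.indicator (fun _ => (1:ℝ≥0∞)) (shiftSeq y) ∂μ := rfl
        _ = ∫⁻ x, transferE A φ (fun y => T.indicator (fun _ => (1:ℝ≥0∞)) (shiftSeq y)) x ∂μ :=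
            (hdual _ hmeas).symm
        _ = ∫⁻ x, T.indicator (fun _ => (1:ℝ≥0∞)) x ∂μ := by
            congr 1; funext x; exact hpt x
        _ = μ T := by rw [lintegral_indicator hT]; simp
    have : shiftSeq^[k+1] ⁻¹' S = shiftSeq ⁻¹' (shiftSeq^[k] ⁻¹' S) := by
      rw [Function.iterate_succ]; rfl
    rw [this, hstep _ ((measurable_shiftSeq.iterate k) hS), ih]

/-- With nested holes `U_n` (unions of `n`-cylinders, `μ(U_n) ≤ c ρⁿ`,
`ρ < θ < 1`), a Gibbs-type correlation bound, `‖w‖_∞ ≤ c ‖w‖_θ`, and the perturbed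
operators `L_n w = L(χ_{U_n^c} w)`, the asymmetric operator norm
`|||L − L_n||| = sup {‖(L − L_n)w‖_h : ‖w‖_θ ≤ 1}` is at most `C (ρ/θ)ⁿ`. -/
theorem asymmetric_norm_perturbation_bound {l : ℕ} (A : Fin l → Fin l → Bool)
    (θ ρ c : ℝ) (hρ : 0 < ρ) (hρθ : ρ < θ) (hθ1 : θ < 1) (hc : 0 < c)
    (φ : (ℕ → Fin l) → ℝ)
    (μ : Measure (ℕ → Fin l)) [IsProbabilityMeasure μ]
    (hL1 : ∀ x, transfer A φ (fun _ => 1) x = 1)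
    (hdual : ∀ g : (ℕ → Fin l) → ℝ≥0∞, Measurable g →
      ∫⁻ x, transferE A φ g x ∂μ = ∫⁻ x, g x ∂μ)
    (U : ℕ → Set (ℕ → Fin l))
    (hUmeas : ∀ n, MeasurableSet (U n))
    (hnested : Antitone U)
    (hUcyl : ∀ n, ∀ x ∈ U n, cyl x n ⊆ U n)
    (hUsmall : ∀ n, μ (U n) ≤ ENNReal.ofReal (c * ρ ^ n))
    (hcorr : ∀ n m j : ℕ, 1 ≤ n → 1 ≤ m → n ≤ j →
      μ (U n ∩ shiftSeq^[j] ⁻¹' U m) ≤ ENNReal.ofReal c * μ (U n) * μ (U m))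
    (hsup : ∀ w : (ℕ → Fin l) → ℝ, Measurable w →
      ∀ᵐ x ∂μ, ENNReal.ofReal |w x| ≤ ENNReal.ofReal c * thetaNorm μ θ w) :
    ∃ C : ℝ, 0 < C ∧ ∀ n : ℕ, ∀ w : (ℕ → Fin l) → ℝ, Measurable w →
      thetaNorm μ θ w ≤ 1 →
      holeNorm μ θ U
        (fun x => transfer A φ w x - transfer A φ (Set.indicator (U n)ᶜ w) x)
        ≤ ENNReal.ofReal (C * (ρ / θ) ^ n) := by
  have hθ0 : (0:ℝ) < θ := hρ.trans hρθ
  have hq0 : (0:ℝ) < ρ / θ := div_pos hρ hθ0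
  have hq1 : ρ / θ < 1 := (div_lt_one hθ0).2 hρθ
  refine ⟨2 * c ^ 2, by positivity, ?_⟩
  intro n w hw hwθ
  have hveq : (fun x => transfer A φ w x - transfer A φ (Set.indicator (U n)ᶜ w) x)
      = fun x => transfer A φ ((U n).indicator w) x := by
    funext x
    unfold transfer
    rw [← Finset.sum_sub_distrib]
    refine Finset.sum_congr rfl fun a _ => ?_
    split
    · rw [← mul_sub]
      congr 1
      by_cases hy : prepend a x ∈ U n <;> simp [Set.indicator_apply, hy]
    · simp
  have hwint : ∀ T : Set (ℕ → Fin l), MeasurableSet T →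
      ∫⁻ x in T, ENNReal.ofReal |w x| ∂μ ≤ ENNReal.ofReal c * μ T := by
    intro T hT
    calc ∫⁻ x in T, ENNReal.ofReal |w x| ∂μ
        ≤ ∫⁻ _x in T, ENNReal.ofReal c * thetaNorm μ θ w ∂μ :=
          lintegral_mono_ae (ae_restrict_of_ae (hsup w hw))
      _ = ENNReal.ofReal c * thetaNorm μ θ w * μ T := setLIntegral_const _ _
      _ ≤ ENNReal.ofReal c * 1 * μ T :=
          mul_le_mul_left (mul_le_mul_right hwθ _) _
      _ = ENNReal.ofReal c * μ T := by rw [mul_one]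
  have hmain : ∀ j m : ℕ,
      ∫⁻ x in shiftSeq^[j] ⁻¹' U m, ENNReal.ofReal |transfer A φ ((U n).indicator w) x| ∂μ
        ≤ ENNReal.ofReal c * μ (U n ∩ shiftSeq^[j+1] ⁻¹' U m) := by
    intro j m
    have hS : MeasurableSet (shiftSeq^[j] ⁻¹' U m) := (measurable_shiftSeq.iterate j) (hUmeas m)
    have hpre : shiftSeq ⁻¹' (shiftSeq^[j] ⁻¹' U m) = shiftSeq^[j+1] ⁻¹' U m := by
      rw [Function.iterate_succ]; rfl
    calc ∫⁻ x in shiftSeq^[j] ⁻¹' U m, ENNReal.ofReal |transfer A φ ((U n).indicator w) x| ∂μ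
        ≤ ∫⁻ y in shiftSeq ⁻¹' (shiftSeq^[j] ⁻¹' U m), ENNReal.ofReal |(U n).indicator w y| ∂μ :=
          key_int A φ μ hdual _ (hw.indicator (hUmeas n)) _ hS
      _ = ∫⁻ y in shiftSeq^[j+1] ⁻¹' U m, (U n).indicator (fun y => ENNReal.ofReal |w y|) y ∂μ := by
          rw [hpre]; congr 1; funext y
          by_cases hy : y ∈ U n <;> simp [Set.indicator_apply, hy]
      _ = ∫⁻ y in U n ∩ shiftSeq^[j+1] ⁻¹' U m, ENNReal.ofReal |w y| ∂μ := by
          rw [lintegral_indicator (hUmeas n), Measure.restrict_restrict (hUmeas n)]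
      _ ≤ ENNReal.ofReal c * μ (U n ∩ shiftSeq^[j+1] ⁻¹' U m) :=
          hwint _ ((hUmeas n).inter ((measurable_shiftSeq.iterate (j+1)) (hUmeas m)))
  have hθm : ∀ m : ℕ, ((ENNReal.ofReal θ) ^ m)⁻¹ = ENNReal.ofReal ((θ ^ m)⁻¹) := by
    intro m
    rw [← ENNReal.ofReal_pow hθ0.le, ← ENNReal.ofReal_inv_of_pos (pow_pos hθ0 m)]
  have hofmul : ∀ (a b r : ℝ) (s : ℝ≥0∞), 0 ≤ a → 0 ≤ b → s ≤ ENNReal.ofReal r →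
      ENNReal.ofReal a * (ENNReal.ofReal b * s) ≤ ENNReal.ofReal (a * (b * r)) := by
    intro a b r s ha hb hs
    calc ENNReal.ofReal a * (ENNReal.ofReal b * s)
        ≤ ENNReal.ofReal a * (ENNReal.ofReal b * ENNReal.ofReal r) :=
          mul_le_mul_right (mul_le_mul_right hs _) _
      _ = ENNReal.ofReal (a * (b * r)) := by
          rw [ENNReal.ofReal_mul ha, ENNReal.ofReal_mul hb]
  have hsub : (⨆ j : ℕ, ⨆ m : ℕ, ⨆ _ : 1 ≤ m, ((ENNReal.ofReal θ) ^ m)⁻¹ *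
      ∫⁻ x in shiftSeq^[j] ⁻¹' U m,
        ENNReal.ofReal |transfer A φ ((U n).indicator w) x| ∂μ)
      ≤ ENNReal.ofReal (c ^ 2 * (ρ / θ) ^ n) := by
    refine iSup_le fun j => iSup_le fun m => iSup_le fun hm => ?_
    rw [hθm m]
    refine (mul_le_mul_right (hmain j m) _).trans ?_
    rcases le_total m n with hmn | hnm
    · refine (hofmul _ _ _ _ (by positivity) hc.le
        ((measure_mono Set.inter_subset_left).trans (hUsmall n))).trans ?_
      apply ENNReal.ofReal_le_ofReal
      have h1 : (θ ^ m)⁻¹ ≤ (θ ^ n)⁻¹ :=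
        inv_anti₀ (pow_pos hθ0 n) (pow_le_pow_of_le_one hθ0.le hθ1.le hmn)
      have h2 : (ρ / θ) ^ n = ρ ^ n * (θ ^ n)⁻¹ := by rw [div_pow, div_eq_mul_inv]
      calc (θ ^ m)⁻¹ * (c * (c * ρ ^ n)) ≤ (θ ^ n)⁻¹ * (c * (c * ρ ^ n)) :=
            mul_le_mul_of_nonneg_right h1 (by positivity)
        _ = c ^ 2 * (ρ / θ) ^ n := by rw [h2]; ring
    · have hμ : μ (U n ∩ shiftSeq^[j+1] ⁻¹' U m) ≤ ENNReal.ofReal (c * ρ ^ m) := by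
        refine (measure_mono Set.inter_subset_right).trans ?_
        rw [shift_inv A φ μ hL1 hdual (U m) (hUmeas m) (j+1)]
        exact hUsmall m
      refine (hofmul _ _ _ _ (by positivity) hc.le hμ).trans ?_
      apply ENNReal.ofReal_le_ofReal
      have h2 : ∀ k : ℕ, (ρ / θ) ^ k = ρ ^ k * (θ ^ k)⁻¹ := fun k => by
        rw [div_pow, div_eq_mul_inv]
      have h3 : (ρ / θ) ^ m ≤ (ρ / θ) ^ n := pow_le_pow_of_le_one hq0.le hq1.le hnm
      calc (θ ^ m)⁻¹ * (c * (c * ρ ^ m)) = c ^ 2 * (ρ / θ) ^ m := by rw [h2]; ring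
        _ ≤ c ^ 2 * (ρ / θ) ^ n := mul_le_mul_of_nonneg_left h3 (by positivity)
  have hL1' : ∫⁻ x, ENNReal.ofReal |transfer A φ ((U n).indicator w) x| ∂μ
      ≤ ENNReal.ofReal (c ^ 2 * (ρ / θ) ^ n) := by
    have h0 := key_int A φ μ hdual _ (hw.indicator (hUmeas n)) Set.univ MeasurableSet.univ
    rw [Measure.restrict_univ, Set.preimage_univ, Measure.restrict_univ] at h0
    refine h0.trans ?_
    have heq : ∫⁻ y, ENNReal.ofReal |(U n).indicator w y| ∂μ
        = ∫⁻ y in U n, ENNReal.ofReal |w y| ∂μ := by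
      rw [← lintegral_indicator (hUmeas n)]
      congr 1; funext y
      by_cases hy : y ∈ U n <;> simp [Set.indicator_apply, hy]
    rw [heq]
    refine (hwint _ (hUmeas n)).trans ?_
    refine (mul_le_mul_right (hUsmall n) _).trans ?_
    rw [← ENNReal.ofReal_mul hc.le]
    apply ENNReal.ofReal_le_ofReal
    have hle : ρ ≤ ρ / θ := by rw [le_div_iff₀ hθ0]; nlinarith
    have hρθn : ρ ^ n ≤ (ρ / θ) ^ n := pow_le_pow_left₀ hρ.le hle n
    calc c * (c * ρ ^ n) = c ^ 2 * ρ ^ n := by ring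
      _ ≤ c ^ 2 * (ρ / θ) ^ n := mul_le_mul_of_nonneg_left hρθn (by positivity)
  rw [hveq]
  unfold holeNorm
  refine (add_le_add hsub hL1').trans ?_
  rw [← ENNReal.ofReal_add (by positivity) (by positivity)]
  apply ENNReal.ofReal_le_ofReal
  nlinarith [pow_nonneg hq0.le n, sq_nonneg c]


end
end
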